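/- arXiv:2507.17246 — 3 statements merged into one kernel-verified Lean document; each statement's English description precedes it below -/
import Mathlib

section
/- Let H₁ be the unicyclic graph of order n obtained from a cycle C_g (3 ≤ g ≤ n−2) by attaching, at a single vertex of the cycle, k ≥ 0 pendant paths of length 1 and ℓ ≥ 0 pendant paths of length at least 2 (with k + ℓ ≥ 1 since g ≤ n−2). Then EUS(H₁) ≥ 3√19 + 2(n−4)√3 + √7, with equality if and only if H₁ is isomorphic to C_{n,g}, the graph obtained by attaching a single pendant path P_{n−g} to one vertex of the cycle C_g. -/
open scoped Classical

noncomputable def eusWeight {V : Type*} [Fintype V] (G : SimpleGraph V) : Sym2 V → ℝ :=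
  Sym2.lift ⟨fun i j => Real.sqrt ((G.degree i : ℝ)^2 + (G.degree j : ℝ)^2 +
      (G.degree i : ℝ) * (G.degree j : ℝ)),
    fun i j => by ring_nf⟩

/-- The Euler Sombor index of a finite simple graph:
`EUS(G) = Σ_{v_i v_j ∈ E(G)} √(d_i² + d_j² + d_i d_j)`. -/
noncomputable def EUS {V : Type*} [Fintype V] (G : SimpleGraph V) : ℝ :=
  ∑ e ∈ G.edgeFinset, eusWeight G e

/-- Starting index (offset) of the `t`-th long pendant path in the graph `H₁`:
the cycle uses vertices `0,…,g-1`, the `k` pendant (length-one) neighbours of the hub `0` are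
`g,…,g+k-1`, and the `t`-th pendant path of length `m t ≥ 2` occupies the `m t` consecutive
vertices starting at `pathOffset g k m t`. -/
def pathOffset {ℓ : ℕ} (g k : ℕ) (m : Fin ℓ → ℕ) (t : Fin ℓ) : ℕ :=
  g + k + ∑ s ∈ Finset.univ.filter (fun s => s < t), m s

/-- The unicyclic graph `H₁` of order `n`: a cycle on the vertices `0,…,g-1`, with `k` pendant
paths of length `1` (the vertices `g,…,g+k-1`) and `ℓ` pendant paths of lengths `m t ≥ 2`
(`t : Fin ℓ`), all attached at the hub vertex `0` (which then has degree `k + ℓ + 2`). -/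
def H1 (n g k : ℕ) {ℓ : ℕ} (m : Fin ℓ → ℕ) : SimpleGraph (Fin n) :=
  SimpleGraph.fromRel (fun i j =>
    -- edges of the cycle `0 — 1 — ⋯ — (g-1) — 0`
    (j.val = i.val + 1 ∧ i.val + 1 < g) ∨ (i.val = 0 ∧ j.val = g - 1) ∨
    -- the `k` pendant edges at the hub
    (i.val = 0 ∧ g ≤ j.val ∧ j.val < g + k) ∨
    -- first edge of each long pendant path
    (∃ t : Fin ℓ, i.val = 0 ∧ j.val = pathOffset g k m t) ∨
    -- internal edges of each long pendant path
    (∃ t : Fin ℓ, j.val = i.val + 1 ∧ pathOffset g k m t ≤ i.val ∧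
      i.val + 1 < pathOffset g k m t + m t))


/-- `cycleWithPath n g` : the unicyclic graph `C_{n,g}` obtained from the cycle on vertices
`0, …, g-1` by attaching the pendant path `0 — g — (g+1) — ⋯ — (n-1)`. -/
def cycleWithPath (n g : ℕ) : SimpleGraph (Fin n) :=
  SimpleGraph.fromRel (fun i j =>
    (j.val = i.val + 1 ∧ i.val + 1 ≠ g) ∨ (i.val = 0 ∧ (j.val = g - 1 ∨ j.val = g)))

/-!
The hub `0` of `H₁` has degree `d = k + ℓ + 2`; the `k` pendant vertices and the ends of the
`ℓ` long paths are leaves, and every other vertex has degree `2`. Orienting the edges towards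
the hub, each vertex `a ≠ 0` owns the edge to its parent, which leaves only the edge `{0, g - 1}`
closing the cycle. Counting edges by the degrees of their ends, with `f(x, y) = √(x² + y² + xy)`,
`EUS(H₁) = (ℓ + 2) f(d, 2) + k f(d, 1) + ℓ √7 + 2 (n - k - 2ℓ - 2) √3`.
For fixed `n` this is strictly smallest at `(k, ℓ) = (0, 1)`: for `k + ℓ ≥ 2` the bounds
`f(d, 2) ≥ d + 1` and `f(d, 1) ≥ d + 1/2` already suffice, and `(1, 0)` is a numerical check.
Finally `H₁` with `(k, ℓ) = (0, 1)` is literally `C_{n,g}`, and `EUS` is an isomorphism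
invariant.
-/

open Finset

noncomputable def eusTerm (x y : ℕ) : ℝ := √((x : ℝ) ^ 2 + (y : ℝ) ^ 2 + (x : ℝ) * y)

lemma eusWeight_mk {V : Type*} [Fintype V] (G : SimpleGraph V) (u v : V) :
    eusWeight G s(u, v) = eusTerm (G.degree u) (G.degree v) := rfl

lemma eusTerm_two_two : eusTerm 2 2 = 2 * √3 := by
  rw [eusTerm, show ((2 : ℕ) : ℝ) ^ 2 + (2 : ℕ) ^ 2 + (2 : ℕ) * (2 : ℕ) = 2 ^ 2 * 3 by
    norm_num, Real.sqrt_mul (by norm_num), Real.sqrt_sq (by norm_num)]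

lemma eusTerm_two_one : eusTerm 2 1 = √7 := by
  norm_num [eusTerm]

lemma eusTerm_three_two : eusTerm 3 2 = √19 := by
  norm_num [eusTerm]

lemma eusTerm_three_one : eusTerm 3 1 = √13 := by
  norm_num [eusTerm]

lemma add_one_le_eusTerm_two (d : ℕ) : (d : ℝ) + 1 ≤ eusTerm d 2 := by
  refine Real.le_sqrt_of_sq_le ?_
  push_cast
  nlinarith [sq_nonneg (d : ℝ)]

lemma add_half_le_eusTerm_one (d : ℕ) : (d : ℝ) + 1 / 2 ≤ eusTerm d 1 := by
  refine Real.le_sqrt_of_sq_le ?_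
  push_cast
  nlinarith [sq_nonneg (d : ℝ)]

/-- The part of `EUS (H1 n g k m)` that depends on `(k, ℓ)` once `n` is fixed (`H1.EUS_eq`). -/
noncomputable def hubPart (k ℓ : ℕ) : ℝ :=
  (ℓ + 2) * eusTerm (k + ℓ + 2) 2 + k * eusTerm (k + ℓ + 2) 1 + ℓ * √7 -
    2 * (k + 2 * ℓ) * √3

lemma hubPart_zero_one : hubPart 0 1 = 3 * √19 + √7 - 4 * √3 := by
  norm_num [hubPart, eusTerm_three_two]

lemma hubPart_zero_one_lt {k ℓ : ℕ} (hkl : 1 ≤ k + ℓ) (h : ¬(k = 0 ∧ ℓ = 1)) :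
    hubPart 0 1 < hubPart k ℓ := by
  have h7 : √7 < 2.6458 := (Real.sqrt_lt' (by norm_num)).2 (by norm_num)
  have h19 : √19 < 4.3589 := (Real.sqrt_lt' (by norm_num)).2 (by norm_num)
  rw [hubPart_zero_one]
  rcases (by omega : k = 1 ∧ ℓ = 0 ∨ 2 ≤ k + ℓ) with ⟨rfl, rfl⟩ | hkl₂
  · have h3 : 1.732 < √3 := (Real.lt_sqrt (by norm_num)).2 (by norm_num)
    have h13 : 3.6055 < √13 := (Real.lt_sqrt (by norm_num)).2 (by norm_num)
    norm_num [hubPart, eusTerm_three_two, eusTerm_three_one]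
    linarith
  · have h3 : √3 < 1.7321 := (Real.sqrt_lt' (by norm_num)).2 (by norm_num)
    have h7' : 2.645 < √7 := (Real.lt_sqrt (by norm_num)).2 (by norm_num)
    have hk : (0 : ℝ) ≤ k := k.cast_nonneg
    have hℓ : (0 : ℝ) ≤ ℓ := ℓ.cast_nonneg
    have hkℓ : (2 : ℝ) ≤ k + ℓ := by exact_mod_cast hkl₂
    have hd2 := mul_le_mul_of_nonneg_left (add_one_le_eusTerm_two (k + ℓ + 2))
      (by linarith : (0 : ℝ) ≤ ℓ + 2)
    have hd1 := mul_le_mul_of_nonneg_left (add_half_le_eusTerm_one (k + ℓ + 2)) hk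
    have hℓ7 := mul_le_mul_of_nonneg_left h7'.le hℓ
    have hkℓ3 := mul_le_mul_of_nonneg_left h3.le (by linarith : (0 : ℝ) ≤ 2 * (k + 2 * ℓ))
    push_cast at hd2 hd1
    rw [hubPart]
    nlinarith [mul_nonneg hk hℓ]

theorem SimpleGraph.Iso.degree_apply {V W : Type*} [Fintype V] [Fintype W] {G : SimpleGraph V}
    {G' : SimpleGraph W} (φ : G ≃g G') (v : V) : G'.degree (φ v) = G.degree v := by
  rw [← SimpleGraph.card_neighborSet_eq_degree, ← SimpleGraph.card_neighborSet_eq_degree]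
  exact Fintype.card_congr (φ.mapNeighborSet v).symm

theorem SimpleGraph.Iso.EUS_eq {V W : Type*} [Fintype V] [Fintype W] {G : SimpleGraph V}
    {G' : SimpleGraph W} (φ : G ≃g G') : EUS G = EUS G' := by
  refine sum_nbij' (Sym2.map φ) (Sym2.map φ.symm) ?_ ?_ ?_ ?_ ?_ <;> intro e _
  · rwa [SimpleGraph.mem_edgeFinset, φ.map_mem_edgeSet_iff, ← SimpleGraph.mem_edgeFinset]
  · rwa [SimpleGraph.mem_edgeFinset, φ.symm.map_mem_edgeSet_iff, ← SimpleGraph.mem_edgeFinset]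
  · simp [Sym2.map_map]
  · simp [Sym2.map_map]
  · induction e using Sym2.ind with | _ a b => ?_
    rw [Sym2.map_mk, eusWeight_mk, eusWeight_mk, φ.degree_apply, φ.degree_apply]

section PathBlocks

variable {ℓ : ℕ} (g k : ℕ) (m : Fin ℓ → ℕ)

def pathBlock (t : Fin ℓ) : Finset ℕ :=
  Ico (pathOffset g k m t) (pathOffset g k m t + m t)

lemma le_pathOffset (t : Fin ℓ) : g + k ≤ pathOffset g k m t := Nat.le_add_right _ _

lemma pathOffset_add_le_of_lt {t t' : Fin ℓ} (h : t < t') :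
    pathOffset g k m t + m t ≤ pathOffset g k m t' := by
  have hsub : insert t (univ.filter (· < t)) ⊆ univ.filter (· < t') := by
    intro s hs
    rw [mem_insert, mem_filter] at hs
    rcases hs with rfl | ⟨-, hs⟩
    exacts [mem_filter.2 ⟨mem_univ _, h⟩, mem_filter.2 ⟨mem_univ _, hs.trans h⟩]
  have := sum_le_sum_of_subset (f := m) hsub
  rw [sum_insert (by simp)] at this
  unfold pathOffset
  omega

lemma pathOffset_add_le (t : Fin ℓ) : pathOffset g k m t + m t ≤ g + k + ∑ s, m s := by
  have := sum_le_sum_of_subset (f := m) (subset_univ (insert t (univ.filter (· < t))))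
  rw [sum_insert (by simp)] at this
  unfold pathOffset
  omega

lemma disjoint_pathBlock {t t' : Fin ℓ} (h : t ≠ t') :
    Disjoint (pathBlock g k m t) (pathBlock g k m t') := by
  rw [pathBlock, pathBlock, disjoint_left]
  intro v hv hv'
  rw [mem_Ico] at hv hv'
  rcases h.lt_or_gt with h | h <;> have := pathOffset_add_le_of_lt g k m h <;> omega

lemma eq_of_mem_pathBlock {t t' : Fin ℓ} {v : ℕ} (h : v ∈ pathBlock g k m t)
    (h' : v ∈ pathBlock g k m t') : t = t' :=
  by_contra fun hne => disjoint_left.1 (disjoint_pathBlock g k m hne) h h'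

/-- By counting: the blocks are disjoint, lie in this range, and their sizes add up to its
length. -/
lemma biUnion_pathBlock : univ.biUnion (pathBlock g k m) = Ico (g + k) (g + k + ∑ t, m t) := by
  refine eq_of_subset_of_card_le (fun v hv => ?_) ?_
  · obtain ⟨t, -, hv⟩ := mem_biUnion.1 hv
    rw [pathBlock, mem_Ico] at hv
    have := le_pathOffset g k m t
    have := pathOffset_add_le g k m t
    rw [mem_Ico]
    omega
  · rw [card_biUnion fun t _ t' _ h => disjoint_pathBlock g k m h]
    simp [pathBlock]

lemma exists_mem_pathBlock {v : ℕ} (h : g + k ≤ v) (h' : v < g + k + ∑ t, m t) :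
    ∃ t, v ∈ pathBlock g k m t := by
  simpa using (biUnion_pathBlock g k m).ge (mem_Ico.2 ⟨h, h'⟩)

lemma pathOffset_mem_pathBlock {t : Fin ℓ} (ht : 0 < m t) :
    pathOffset g k m t ∈ pathBlock g k m t := by
  rw [pathBlock, mem_Ico]
  omega

lemma pathOffset_injective (hm : ∀ t, 0 < m t) : Function.Injective (pathOffset g k m) :=
  fun t t' h => eq_of_mem_pathBlock g k m (pathOffset_mem_pathBlock g k m (hm t))
    (h ▸ pathOffset_mem_pathBlock g k m (hm t'))

end PathBlocks

namespace H1

variable {ℓ g k n : ℕ} {m : Fin ℓ → ℕ} {a b u v : ℕ}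

def IsHubChild (g k : ℕ) (m : Fin ℓ → ℕ) (a : ℕ) : Prop :=
  (g ≤ a ∧ a < g + k) ∨ ∃ t, a = pathOffset g k m t

/-- Every vertex `a ≠ 0` of `H1` is joined to `parent a < a`, its neighbour towards the hub `0`;
these edges together with the edge `{0, g - 1}` closing the cycle are all the edges. -/
noncomputable def parent (g k : ℕ) (m : Fin ℓ → ℕ) (a : ℕ) : ℕ :=
  if IsHubChild g k m a then 0 else a - 1

def Linked (g k : ℕ) (m : Fin ℓ → ℕ) (a b : ℕ) : Prop :=
  (0 < b ∧ a = parent g k m b) ∨ (a = 0 ∧ b = g - 1)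

lemma not_isHubChild_of_lt (h : a < g) : ¬IsHubChild g k m a := by
  rintro (⟨h', -⟩ | ⟨t, rfl⟩)
  · omega
  · have := le_pathOffset g k m t
    omega

lemma not_isHubChild_of_interior (hm : ∀ t, 0 < m t) {t : Fin ℓ}
    (h : pathOffset g k m t < a) (h' : a < pathOffset g k m t + m t) :
    ¬IsHubChild g k m a := by
  rintro (⟨-, ha⟩ | ⟨t', rfl⟩)
  · have := le_pathOffset g k m t
    omega
  · have := eq_of_mem_pathBlock g k m (pathOffset_mem_pathBlock g k m (hm t'))
      (mem_Ico.2 ⟨h.le, h'⟩)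
    subst this
    omega

lemma isHubChild_or_interior (h : g ≤ a) (h' : a < g + k + ∑ t, m t) :
    IsHubChild g k m a ∨ ∃ t, pathOffset g k m t < a ∧ a < pathOffset g k m t + m t := by
  by_cases hk : a < g + k
  · exact Or.inl (Or.inl ⟨h, hk⟩)
  obtain ⟨t, ht⟩ := exists_mem_pathBlock g k m (by omega) h'
  rw [pathBlock, mem_Ico] at ht
  rcases ht.1.eq_or_lt with ht' | ht'
  · exact Or.inl (Or.inr ⟨t, ht'.symm⟩)
  · exact Or.inr ⟨t, ht', ht.2⟩

lemma parent_le (a : ℕ) : parent g k m a ≤ a := by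
  unfold parent
  split_ifs <;> omega

lemma parent_lt (h : 0 < a) : parent g k m a < a := by
  unfold parent
  split_ifs <;> omega

lemma parent_of_isHubChild (h : IsHubChild g k m a) : parent g k m a = 0 :=
  if_pos h

lemma parent_of_not_isHubChild (h : ¬IsHubChild g k m a) : parent g k m a = a - 1 :=
  if_neg h

lemma parent_eq_iff_of_pos (hv : 0 < v) :
    parent g k m u = v ↔ u = v + 1 ∧ ¬IsHubChild g k m (v + 1) := by
  unfold parent
  split_ifs with hu
  · exact ⟨fun h => absurd h hv.ne, fun ⟨h, h'⟩ => absurd (h ▸ hu) h'⟩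
  · constructor
    · intro h
      obtain rfl : u = v + 1 := by omega
      exact ⟨rfl, hu⟩
    · rintro ⟨rfl, -⟩
      omega

lemma parent_eq_zero_iff (hu : 0 < u) : parent g k m u = 0 ↔ u = 1 ∨ IsHubChild g k m u := by
  unfold parent
  split_ifs with h <;> simp only [h, or_true, or_false]
  omega

lemma Linked.lt (hg : 2 ≤ g) (h : Linked g k m a b) : a < b := by
  rcases h with ⟨hb, rfl⟩ | ⟨rfl, rfl⟩
  · exact parent_lt hb
  · omega

/-- The right-hand side is the relation `H1` is built from. -/
lemma linked_iff (hg : 0 < g) (hm : ∀ t, 0 < m t) (hb : b < g + k + ∑ t, m t) :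
    Linked g k m a b ↔ (b = a + 1 ∧ a + 1 < g) ∨ (a = 0 ∧ b = g - 1) ∨
      (a = 0 ∧ g ≤ b ∧ b < g + k) ∨ (∃ t, a = 0 ∧ b = pathOffset g k m t) ∨
      (∃ t, b = a + 1 ∧ pathOffset g k m t ≤ a ∧ a + 1 < pathOffset g k m t + m t) := by
  constructor
  · rintro (⟨hb0, rfl⟩ | hclose)
    · by_cases hhub : IsHubChild g k m b
      · rw [parent_of_isHubChild hhub]
        rcases hhub with hpend | ⟨t, rfl⟩
        exacts [Or.inr (Or.inr (Or.inl ⟨rfl, hpend⟩)),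
          Or.inr (Or.inr (Or.inr (Or.inl ⟨t, rfl, rfl⟩)))]
      rw [parent_of_not_isHubChild hhub]
      by_cases hbg : b < g
      · exact Or.inl ⟨by omega, by omega⟩
      obtain hhub' | ⟨t, ht, ht'⟩ := isHubChild_or_interior (m := m) (by omega) hb
      · exact absurd hhub' hhub
      · exact Or.inr (Or.inr (Or.inr (Or.inr ⟨t, by omega, by omega, by omega⟩)))
    · exact Or.inr (Or.inl hclose)
  · rintro (⟨rfl, hg⟩ | hclose | ⟨rfl, hpend⟩ | ⟨t, rfl, rfl⟩ | ⟨t, rfl, ht, ht'⟩)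
    · exact Or.inl ⟨by omega, by rw [parent_of_not_isHubChild (not_isHubChild_of_lt hg)]; rfl⟩
    · exact Or.inr hclose
    · exact Or.inl ⟨by omega, (parent_of_isHubChild (Or.inl hpend)).symm⟩
    · exact Or.inl ⟨by have := le_pathOffset g k m t; omega,
        (parent_of_isHubChild (Or.inr ⟨t, rfl⟩)).symm⟩
    · refine Or.inl ⟨by omega, ?_⟩
      rw [parent_of_not_isHubChild (not_isHubChild_of_interior hm (by omega) ht')]
      rfl

theorem adj_iff (hg : 2 ≤ g) (hm : ∀ t, 0 < m t) (hn : n = g + k + ∑ t, m t)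
    (i j : Fin n) :
    (H1 n g k m).Adj i j ↔ Linked g k m i j ∨ Linked g k m j i := by
  have hne : Linked g k m i j ∨ Linked g k m j i → i ≠ j := by
    rintro (h | h) rfl <;> exact (h.lt hg).false
  rw [← and_iff_right_of_imp hne, H1, SimpleGraph.fromRel_adj]
  exact and_congr_right fun _ => or_congr (linked_iff (by omega) hm (hn ▸ j.isLt)).symm
    (linked_iff (by omega) hm (hn ▸ i.isLt)).symm

/-- The degree of the vertex `a` of `H1`, read on `ℕ` (junk value `0` for `a ≥ n`). -/
noncomputable def deg (n g k : ℕ) (m : Fin ℓ → ℕ) (a : ℕ) : ℕ :=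
  if h : a < n then (H1 n g k m).degree ⟨a, h⟩ else 0

lemma degree_eq_deg (v : Fin n) : (H1 n g k m).degree v = deg n g k m v := by
  rw [deg, dif_pos v.isLt]

lemma deg_eq_card (hg : 2 ≤ g) (hm : ∀ t, 0 < m t) (hn : n = g + k + ∑ t, m t) (ha : a < n) :
    deg n g k m a = ((range n).filter fun u => Linked g k m a u ∨ Linked g k m u a).card := by
  rw [deg, dif_pos ha, ← SimpleGraph.card_neighborFinset_eq_degree,
    SimpleGraph.neighborFinset_eq_filter, ← card_map Fin.valEmbedding]
  congr 1
  ext u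
  simp only [mem_map, mem_filter, mem_univ, true_and, Fin.valEmbedding_apply, mem_range,
    adj_iff hg hm hn]
  constructor
  · rintro ⟨w, hw, rfl⟩
    exact ⟨w.isLt, hw⟩
  · rintro ⟨hu, h⟩
    exact ⟨⟨u, hu⟩, h, rfl⟩

lemma linked_or_linked_iff_of_pos (ha : 0 < a) :
    Linked g k m a u ∨ Linked g k m u a ↔
      u = parent g k m a ∨ (a = g - 1 ∧ u = 0) ∨ (u = a + 1 ∧ ¬IsHubChild g k m (a + 1)) := by
  unfold Linked
  rw [eq_comm (a := a) (b := parent g k m u), parent_eq_iff_of_pos ha]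
  simp only [ha.ne', ha, false_and, or_false, true_and]
  constructor
  · rintro (⟨-, h⟩ | h | ⟨h, h'⟩)
    exacts [Or.inr (Or.inr h), Or.inl h, Or.inr (Or.inl ⟨h', h⟩)]
  · rintro (h | ⟨h, h'⟩ | h)
    · exact Or.inr (Or.inl h)
    · exact Or.inr (Or.inr ⟨h', h⟩)
    · exact Or.inl ⟨by omega, h⟩

lemma deg_eq_two_of_not_isHubChild_succ (hg : 2 ≤ g) (hm : ∀ t, 0 < m t)
    (hn : n = g + k + ∑ t, m t) (ha : 0 < a) (hag : a ≠ g - 1) (ha' : a + 1 < n)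
    (h : ¬IsHubChild g k m (a + 1)) : deg n g k m a = 2 := by
  have hpa := parent_lt (g := g) (k := k) (m := m) ha
  rw [deg_eq_card hg hm hn (by omega), ← card_pair (by omega : parent g k m a ≠ a + 1)]
  congr 1
  ext u
  rw [mem_filter, linked_or_linked_iff_of_pos ha, mem_range, mem_insert, mem_singleton]
  simp only [hag, h, false_and, not_false_eq_true, and_true, false_or]
  omega

lemma deg_eq_one_of_isHubChild_succ (hg : 2 ≤ g) (hm : ∀ t, 0 < m t)
    (hn : n = g + k + ∑ t, m t) (ha : 0 < a) (hag : a ≠ g - 1) (ha' : a < n)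
    (h : a + 1 < n → IsHubChild g k m (a + 1)) : deg n g k m a = 1 := by
  have hpa := parent_lt (g := g) (k := k) (m := m) ha
  rw [deg_eq_card hg hm hn ha', ← card_singleton (parent g k m a)]
  congr 1
  ext u
  rw [mem_filter, linked_or_linked_iff_of_pos ha, mem_range, mem_singleton]
  constructor
  · rintro ⟨hu, hp | ⟨hg', -⟩ | ⟨rfl, hu'⟩⟩
    exacts [hp, absurd hg' hag, absurd (h hu) hu']
  · rintro rfl
    exact ⟨by omega, Or.inl rfl⟩

lemma deg_girth_sub_one (hg : 3 ≤ g) (hm : ∀ t, 0 < m t) (hn : n = g + k + ∑ t, m t)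
    (h : g < n → IsHubChild g k m g) : deg n g k m (g - 1) = 2 := by
  have hp : parent g k m (g - 1) = g - 2 :=
    parent_of_not_isHubChild (not_isHubChild_of_lt (by omega))
  rw [deg_eq_card (by omega) hm hn (by omega), ← card_pair (by omega : g - 2 ≠ 0)]
  congr 1
  ext u
  rw [mem_filter, linked_or_linked_iff_of_pos (by omega), mem_range, mem_insert, mem_singleton,
    hp, Nat.sub_add_cancel (by omega : 1 ≤ g)]
  constructor
  · rintro ⟨hu, hu2 | ⟨-, hu0⟩ | ⟨rfl, hu'⟩⟩
    exacts [Or.inl hu2, Or.inr hu0, absurd (h hu) hu']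
  · rintro (rfl | rfl) <;> omega

lemma filter_linked_zero (hg : 3 ≤ g) (hm : ∀ t, 0 < m t) (hn : n = g + k + ∑ t, m t) :
    (range n).filter (fun u => Linked g k m 0 u ∨ Linked g k m u 0) =
      insert 1 (insert (g - 1) (Ico g (g + k) ∪ univ.image (pathOffset g k m))) := by
  ext u
  simp only [Linked, mem_filter, mem_range, mem_insert, mem_union, mem_Ico, mem_image,
    mem_univ, true_and, lt_irrefl, false_and, false_or]
  rw [eq_comm (a := 0) (b := parent g k m u)]
  constructor
  · rintro ⟨hu, (⟨hu0, hp⟩ | rfl) | ⟨-, hg0⟩⟩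
    · rcases (parent_eq_zero_iff hu0).1 hp with rfl | hpend | ⟨t, rfl⟩
      exacts [Or.inl rfl, Or.inr (Or.inr (Or.inl hpend)), Or.inr (Or.inr (Or.inr ⟨t, rfl⟩))]
    · exact Or.inr (Or.inl rfl)
    · omega
  · have hchild (hu : 0 < u) (h : u = 1 ∨ IsHubChild g k m u) :
        (0 < u ∧ parent g k m u = 0 ∨ u = g - 1) ∨ u = 0 ∧ 0 = g - 1 :=
      Or.inl (Or.inl ⟨hu, (parent_eq_zero_iff hu).2 h⟩)
    rintro (rfl | rfl | hpend | ⟨t, rfl⟩)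
    · exact ⟨by omega, hchild Nat.one_pos (Or.inl rfl)⟩
    · exact ⟨by omega, Or.inl (Or.inr rfl)⟩
    · exact ⟨by omega, hchild (by omega) (Or.inr (Or.inl hpend))⟩
    · have := le_pathOffset g k m t
      have := pathOffset_add_le g k m t
      have := hm t
      exact ⟨by omega, hchild (by omega) (Or.inr (Or.inr ⟨t, rfl⟩))⟩

lemma deg_zero (hg : 3 ≤ g) (hm : ∀ t, 0 < m t) (hn : n = g + k + ∑ t, m t) :
    deg n g k m 0 = k + ℓ + 2 := by
  have h1 : 1 ∉ insert (g - 1) (Ico g (g + k) ∪ univ.image (pathOffset g k m)) := by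
    simp only [mem_insert, mem_union, mem_Ico, mem_image, mem_univ, true_and, not_or,
      not_exists]
    exact ⟨by omega, by omega, fun t => by have := le_pathOffset g k m t; omega⟩
  have h2 : g - 1 ∉ Ico g (g + k) ∪ univ.image (pathOffset g k m) := by
    simp only [mem_union, mem_Ico, mem_image, mem_univ, true_and, not_or, not_exists]
    exact ⟨by omega, fun t => by have := le_pathOffset g k m t; omega⟩
  have h3 : Disjoint (Ico g (g + k)) (univ.image (pathOffset g k m)) := by
    simp only [disjoint_left, mem_Ico, mem_image, mem_univ, true_and, not_exists]
    intro a ha t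
    have := le_pathOffset g k m t
    omega
  rw [deg_eq_card (by omega) hm hn (by omega), filter_linked_zero hg hm hn,
    card_insert_of_notMem h1, card_insert_of_notMem h2, card_union_of_disjoint h3, Nat.card_Ico,
    card_image_of_injective _ (pathOffset_injective g k m hm), card_univ, Fintype.card_fin]
  omega

lemma deg_of_lt_girth (hg : 3 ≤ g) (hm : ∀ t, 0 < m t) (hn : n = g + k + ∑ t, m t)
    (ha : 0 < a) (hag : a < g) : deg n g k m a = 2 := by
  rcases eq_or_ne a (g - 1) with rfl | hag'
  · refine deg_girth_sub_one hg hm hn fun hgn => ?_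
    refine (isHubChild_or_interior le_rfl (hn ▸ hgn)).resolve_right ?_
    rintro ⟨t, ht, -⟩
    have := le_pathOffset g k m t
    omega
  · exact deg_eq_two_of_not_isHubChild_succ (by omega) hm hn ha hag' (by omega)
      (not_isHubChild_of_lt (by omega))

lemma deg_of_pendant (hg : 3 ≤ g) (hm : ∀ t, 0 < m t) (hn : n = g + k + ∑ t, m t)
    (ha : g ≤ a) (ha' : a < g + k) : deg n g k m a = 1 := by
  refine deg_eq_one_of_isHubChild_succ (by omega) hm hn (by omega) (by omega) (by omega)
    fun han => (isHubChild_or_interior (by omega) (hn ▸ han)).resolve_right ?_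
  rintro ⟨t, ht, -⟩
  have := le_pathOffset g k m t
  omega

lemma deg_of_succ_mem_pathBlock (hg : 3 ≤ g) (hm : ∀ t, 0 < m t) (hn : n = g + k + ∑ t, m t)
    {t : Fin ℓ} (ht : pathOffset g k m t ≤ a) (ht' : a + 1 < pathOffset g k m t + m t) :
    deg n g k m a = 2 := by
  have := le_pathOffset g k m t
  have := pathOffset_add_le g k m t
  exact deg_eq_two_of_not_isHubChild_succ (by omega) hm hn (by omega) (by omega) (by omega)
    (not_isHubChild_of_interior hm (by omega) ht')

lemma deg_of_pathBlock_last (hg : 3 ≤ g) (hm : ∀ t, 0 < m t) (hn : n = g + k + ∑ t, m t)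
    {t : Fin ℓ} (ht : a + 1 = pathOffset g k m t + m t) : deg n g k m a = 1 := by
  have := le_pathOffset g k m t
  have := pathOffset_add_le g k m t
  have := hm t
  refine deg_eq_one_of_isHubChild_succ (by omega) hm hn (by omega) (by omega) (by omega)
    fun han => (isHubChild_or_interior (by omega) (hn ▸ han)).resolve_right ?_
  rintro ⟨t', ht₁, ht₂⟩
  have := eq_of_mem_pathBlock g k m (t := t) (t' := t') (v := a)
    (mem_Ico.2 ⟨by omega, by omega⟩) (mem_Ico.2 ⟨by omega, by omega⟩)
  subst this
  omega

lemma edgeFinset_eq (hg : 3 ≤ g) (hm : ∀ t, 0 < m t) (hn : n = g + k + ∑ t, m t) :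
    (H1 n g k m).edgeFinset = insert s(⟨0, by omega⟩, ⟨g - 1, by omega⟩)
      ((univ.filter fun v : Fin n => 0 < v.val).image
        fun v => s(⟨parent g k m v, (parent_le _).trans_lt v.isLt⟩, v)) := by
  ext e
  induction e using Sym2.ind with | _ i j => ?_
  rw [SimpleGraph.mem_edgeFinset, SimpleGraph.mem_edgeSet, adj_iff (by omega) hm hn]
  simp only [mem_insert, mem_image, mem_filter, mem_univ, true_and, Sym2.eq_iff, Fin.ext_iff]
  constructor
  · rintro ((⟨hj, hp⟩ | ⟨hi, hj⟩) | (⟨hi, hp⟩ | ⟨hj, hi⟩))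
    · exact Or.inr ⟨j, hj, Or.inl ⟨hp.symm, rfl⟩⟩
    · exact Or.inl (Or.inl ⟨hi, hj⟩)
    · exact Or.inr ⟨i, hi, Or.inr ⟨hp.symm, rfl⟩⟩
    · exact Or.inl (Or.inr ⟨hi, hj⟩)
  · rintro ((⟨hi, hj⟩ | ⟨hi, hj⟩) | ⟨v, hv, ⟨hp, hvj⟩ | ⟨hp, hvi⟩⟩)
    · exact Or.inl (Or.inr ⟨hi, hj⟩)
    · exact Or.inr (Or.inr ⟨hj, hi⟩)
    · exact Or.inl (Or.inl ⟨hvj ▸ hv, hvj ▸ hp.symm⟩)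
    · exact Or.inr (Or.inl ⟨hvi ▸ hv, hvi ▸ hp.symm⟩)

noncomputable def parentEdgeTerm (n g k : ℕ) (m : Fin ℓ → ℕ) (a : ℕ) : ℝ :=
  eusTerm (deg n g k m (parent g k m a)) (deg n g k m a)

lemma EUS_eq_sum (hg : 3 ≤ g) (hm : ∀ t, 0 < m t) (hn : n = g + k + ∑ t, m t) :
    EUS (H1 n g k m) = eusTerm (deg n g k m 0) (deg n g k m (g - 1)) +
      ∑ a ∈ Ico 1 n, parentEdgeTerm n g k m a := by
  have hclose : s(⟨0, by omega⟩, ⟨g - 1, by omega⟩) ∉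
      (univ.filter fun v : Fin n => 0 < v.val).image
        fun v => s(⟨parent g k m v, (parent_le _).trans_lt v.isLt⟩, v) := by
    simp only [mem_image, mem_filter, mem_univ, true_and, Sym2.eq_iff, Fin.ext_iff, not_exists,
      not_and]
    rintro v hv (⟨hp, hvg⟩ | ⟨-, hv0⟩)
    · rw [hvg, parent_of_not_isHubChild (not_isHubChild_of_lt (by omega))] at hp
      omega
    · omega
  have hinj : Set.InjOn (fun v : Fin n => s(⟨parent g k m v, (parent_le _).trans_lt v.isLt⟩, v))
      (univ.filter fun v : Fin n => 0 < v.val) := by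
    intro u hu v hv huv
    simp only [coe_filter, mem_univ, true_and, Set.mem_ofPred_eq] at hu hv
    rcases Sym2.eq_iff.1 huv with ⟨-, h⟩ | ⟨h, h'⟩
    · exact h
    · have := parent_lt (g := g) (k := k) (m := m) hu
      have := parent_lt (g := g) (k := k) (m := m) hv
      simp only [Fin.ext_iff] at h h'
      omega
  have hIco : (univ.filter fun v : Fin n => 0 < v.val).map Fin.valEmbedding = Ico 1 n := by
    ext a
    simp only [mem_map, mem_filter, mem_univ, true_and, Fin.valEmbedding_apply, mem_Ico]
    constructor
    · rintro ⟨v, hv, rfl⟩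
      exact ⟨hv, v.isLt⟩
    · rintro ⟨ha, ha'⟩
      exact ⟨⟨a, ha'⟩, ha, rfl⟩
  rw [EUS, edgeFinset_eq hg hm hn, sum_insert hclose, sum_image hinj, ← hIco, sum_map,
    eusWeight_mk, degree_eq_deg, degree_eq_deg]
  congr 1
  refine sum_congr rfl fun v _ => ?_
  rw [eusWeight_mk, degree_eq_deg, degree_eq_deg]
  rfl

lemma sum_parentEdgeTerm_cycle (hg : 3 ≤ g) (hm : ∀ t, 0 < m t) (hn : n = g + k + ∑ t, m t) :
    ∑ a ∈ Ico 1 g, parentEdgeTerm n g k m a =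
      eusTerm (k + ℓ + 2) 2 + ((g : ℝ) - 2) * eusTerm 2 2 := by
  have hp {a : ℕ} (ha : a < g) : parent g k m a = a - 1 :=
    parent_of_not_isHubChild (not_isHubChild_of_lt ha)
  rw [sum_eq_sum_Ico_succ_bot (by omega), sum_eq_card_nsmul (b := eusTerm 2 2), Nat.card_Ico,
    nsmul_eq_mul, Nat.cast_sub (by omega), parentEdgeTerm, hp (by omega), deg_zero hg hm hn,
    deg_of_lt_girth hg hm hn (by omega) (by omega)]
  · norm_num
  · intro a ha
    rw [mem_Ico] at ha
    rw [parentEdgeTerm, hp (by omega), deg_of_lt_girth hg hm hn (by omega) (by omega),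
      deg_of_lt_girth hg hm hn (by omega) (by omega)]

lemma sum_parentEdgeTerm_pendant (hg : 3 ≤ g) (hm : ∀ t, 0 < m t) (hn : n = g + k + ∑ t, m t) :
    ∑ a ∈ Ico g (g + k), parentEdgeTerm n g k m a = k * eusTerm (k + ℓ + 2) 1 := by
  rw [sum_eq_card_nsmul (b := eusTerm (k + ℓ + 2) 1), Nat.card_Ico, Nat.add_sub_cancel_left,
    nsmul_eq_mul]
  intro a ha
  rw [mem_Ico] at ha
  rw [parentEdgeTerm, parent_of_isHubChild (Or.inl ha), deg_zero hg hm hn,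
    deg_of_pendant hg hm hn ha.1 ha.2]

lemma sum_parentEdgeTerm_pathBlock (hg : 3 ≤ g) (hm : ∀ t, 2 ≤ m t)
    (hn : n = g + k + ∑ t, m t) (t : Fin ℓ) :
    ∑ a ∈ pathBlock g k m t, parentEdgeTerm n g k m a =
      eusTerm (k + ℓ + 2) 2 + ((m t : ℝ) - 2) * eusTerm 2 2 + eusTerm 2 1 := by
  have hm₀ (t : Fin ℓ) : 0 < m t := by have := hm t; omega
  set o := pathOffset g k m t with ho
  have hmt := hm t
  have hp {a : ℕ} (ha : o < a) (ha' : a < o + m t) : parent g k m a = a - 1 :=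
    parent_of_not_isHubChild (not_isHubChild_of_interior hm₀ ha ha')
  have hlast : o + m t = o + m t - 1 + 1 := by omega
  rw [pathBlock, ← ho, sum_eq_sum_Ico_succ_bot (by omega), hlast, sum_Ico_succ_top (by omega),
    sum_eq_card_nsmul (b := eusTerm 2 2), Nat.card_Ico, nsmul_eq_mul, parentEdgeTerm,
    parentEdgeTerm, parent_of_isHubChild (Or.inr ⟨t, rfl⟩), hp (by omega) (by omega),
    deg_zero hg hm₀ hn,
    deg_of_succ_mem_pathBlock hg hm₀ hn le_rfl (by omega),
    deg_of_succ_mem_pathBlock hg hm₀ hn (by omega) (by omega : o + m t - 1 - 1 + 1 < o + m t),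
    deg_of_pathBlock_last hg hm₀ hn (by omega : o + m t - 1 + 1 = o + m t),
    show o + m t - 1 - (o + 1) = m t - 2 by omega, Nat.cast_sub hmt]
  · ring
  · intro a ha
    rw [mem_Ico] at ha
    rw [parentEdgeTerm, hp (by omega) (by omega),
      deg_of_succ_mem_pathBlock hg hm₀ hn (by omega) (by omega : a - 1 + 1 < o + m t),
      deg_of_succ_mem_pathBlock hg hm₀ hn (by omega) (by omega : a + 1 < o + m t)]

theorem EUS_eq (hg : 3 ≤ g) (hm : ∀ t, 2 ≤ m t) (hn : n = g + k + ∑ t, m t) :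
    EUS (H1 n g k m) = hubPart k ℓ + 2 * ((n : ℝ) - 2) * √3 := by
  have hm₀ (t : Fin ℓ) : 0 < m t := by have := hm t; omega
  have hpaths : Ico (g + k) n = univ.biUnion (pathBlock g k m) := by
    rw [biUnion_pathBlock, hn]
  rw [EUS_eq_sum hg hm₀ hn, deg_zero hg hm₀ hn,
    deg_of_lt_girth hg hm₀ hn (by omega) (by omega),
    ← sum_Ico_consecutive _ (by omega : 1 ≤ g + k) (by omega : g + k ≤ n),
    ← sum_Ico_consecutive _ (by omega : 1 ≤ g) (by omega : g ≤ g + k), hpaths,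
    sum_biUnion fun t _ t' _ h => disjoint_pathBlock g k m h,
    sum_parentEdgeTerm_cycle hg hm₀ hn, sum_parentEdgeTerm_pendant hg hm₀ hn,
    sum_congr rfl fun t _ => sum_parentEdgeTerm_pathBlock hg hm hn t]
  simp only [sum_add_distrib, ← sum_mul, sum_sub_distrib, sum_const, card_univ,
    Fintype.card_fin, nsmul_eq_mul, eusTerm_two_two, eusTerm_two_one, hubPart]
  have hcast : (n : ℝ) = g + k + ∑ t, (m t : ℝ) := by
    rw [hn]
    push_cast
    ring
  rw [hcast]
  ring

lemma eq_cycleWithPath (m : Fin 1 → ℕ) (hm : m 0 = n - g) (hg : 2 ≤ g)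
    (hgn : g < n) : H1 n g 0 m = cycleWithPath n g := by
  have hoff : pathOffset g 0 m 0 = g := by simp [pathOffset]
  ext i j
  simp only [H1, cycleWithPath, SimpleGraph.fromRel_adj, Fin.exists_fin_one, hoff, hm]
  have := i.isLt
  have := j.isLt
  omega

end H1

/-- For the unicyclic graph `H₁` of order `n` and girth `g` (`3 ≤ g ≤ n-2`), having `k ≥ 0`
pendant paths of length `1` and `ℓ ≥ 0` pendant paths of length at least `2` attached at one
vertex of the cycle, we have `EUS(H₁) ≥ 3√19 + 2(n-4)√3 + √7`, with equality if and only if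
`H₁ ≅ C_{n,g}`. -/
theorem eus_H1_lower_bound (n g k ℓ : ℕ) (m : Fin ℓ → ℕ) (hg : 3 ≤ g) (hgn : g + 2 ≤ n)
    (hm : ∀ t, 2 ≤ m t) (hn : n = g + k + ∑ t, m t) :
    3 * Real.sqrt 19 + 2 * ((n : ℝ) - 4) * Real.sqrt 3 + Real.sqrt 7 ≤ EUS (H1 n g k m) ∧
      (EUS (H1 n g k m) = 3 * Real.sqrt 19 + 2 * ((n : ℝ) - 4) * Real.sqrt 3 + Real.sqrt 7 ↔
        Nonempty (H1 n g k m ≃g cycleWithPath n g)) := by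
  have hbound :
      3 * √19 + 2 * ((n : ℝ) - 4) * √3 + √7 = hubPart 0 1 + 2 * ((n : ℝ) - 2) * √3 := by
    rw [hubPart_zero_one]
    ring
  rw [hbound, H1.EUS_eq hg hm hn]
  by_cases h01 : k = 0 ∧ ℓ = 1
  · obtain ⟨rfl, rfl⟩ := h01
    rw [Fin.sum_univ_one] at hn
    rw [← H1.eq_cycleWithPath m (by omega) (by omega) (by omega)]
    exact ⟨le_rfl, iff_of_true rfl ⟨SimpleGraph.Iso.refl⟩⟩
  have hkl : 1 ≤ k + ℓ := by
    by_contra hkl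
    obtain ⟨rfl, rfl⟩ : k = 0 ∧ ℓ = 0 := by omega
    rw [Fin.sum_univ_zero] at hn
    omega
  have hlt : hubPart 0 1 + 2 * ((n : ℝ) - 2) * √3 < hubPart k ℓ + 2 * ((n : ℝ) - 2) * √3 := by
    linarith [hubPart_zero_one_lt hkl h01]
  have hC : EUS (cycleWithPath n g) = hubPart 0 1 + 2 * ((n : ℝ) - 2) * √3 := by
    rw [← H1.eq_cycleWithPath (fun _ => n - g) rfl (by omega) (by omega),
      H1.EUS_eq hg (fun _ => by omega) (by rw [Fin.sum_univ_one]; omega)]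
  refine ⟨hlt.le, iff_of_false hlt.ne' fun ⟨φ⟩ => hlt.ne' ?_⟩
  rw [← H1.EUS_eq hg hm hn, φ.EUS_eq, hC]
end

section
/- Let n, p be positive integers with n − p ≥ 2, let a₁ ≥ aᵢ ≥ 1 be positive integers, and let a_k ≥ 0 be an integer. Then √((n−p+a₁)² + (n−p−1+a_k)² + (n−p+a₁)(n−p−1+a_k)) + √((n−p−2+aᵢ)² + (n−p−1+a_k)² + (n−p−2+aᵢ)(n−p−1+a_k)) − √((n−p−1+a₁)² + (n−p−1+a_k)² + (n−p−1+a₁)(n−p−1+a_k)) − √((n−p−1+aᵢ)² + (n−p−1+a_k)² + (n−p−1+aᵢ)(n−p−1+a_k)) > 0. -/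
/-!
For `c ≠ 0` the weight `x ↦ √(x² + c² + xc)` is strictly convex: it is the Euclidean length of
`(x + c/2, √3 c/2)`. With `a = n-p-1+aᵢ`, `b = n-p-1+a₁`, `c = n-p-1+a_k`, the four degrees
`a - 1 < a ≤ b < b + 1` satisfy `(a - 1) + (b + 1) = a + b`, and for a strictly convex `f` this
forces `f a + f b < f (a - 1) + f (b + 1)`.
-/

open Set

noncomputable def eulerSomborWeight (x y : ℝ) : ℝ := √(x ^ 2 + y ^ 2 + x * y)

lemma eulerSomborWeight_sq (x y : ℝ) : eulerSomborWeight x y ^ 2 = x ^ 2 + y ^ 2 + x * y :=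
  Real.sq_sqrt (by nlinarith [sq_nonneg (x + y / 2)])

/-- Cauchy–Schwarz for the form `x² + xc + c²`: the gap between the squares is `3c²(x - y)²/4`. -/
lemma mul_add_lt_eulerSomborWeight_mul {c x y : ℝ} (hc : c ≠ 0) (hxy : x ≠ y) :
    x * y + (x + y) * c / 2 + c ^ 2 < eulerSomborWeight x c * eulerSomborWeight y c := by
  have hx : 0 ≤ x ^ 2 + c ^ 2 + x * c := by nlinarith [sq_nonneg (x + c / 2)]
  rw [eulerSomborWeight, eulerSomborWeight, ← Real.sqrt_mul hx]
  apply Real.lt_sqrt_of_sq_lt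
  have hgap : 0 < 3 / 4 * c ^ 2 * (x - y) ^ 2 := by
    have := sub_ne_zero.2 hxy
    positivity
  linear_combination hgap

lemma strictConvexOn_eulerSomborWeight_left {c : ℝ} (hc : c ≠ 0) :
    StrictConvexOn ℝ univ (eulerSomborWeight · c) := by
  refine ⟨convex_univ, fun x _ y _ hxy a b ha hb hab => ?_⟩
  obtain rfl : b = 1 - a := by linarith
  have hST := mul_add_lt_eulerSomborWeight_mul hc hxy
  have hS := eulerSomborWeight_sq x c
  have hT := eulerSomborWeight_sq y c
  have hcomb : (a * x + (1 - a) * y) ^ 2 + c ^ 2 + (a * x + (1 - a) * y) * c <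
      (a * eulerSomborWeight x c + (1 - a) * eulerSomborWeight y c) ^ 2 := by
    linear_combination (-a ^ 2) * hS - (1 - a) ^ 2 * hT + 2 * a * (1 - a) * hST
  simp only [smul_eq_mul]
  refine lt_of_pow_lt_pow_left₀ 2 ?_ (by rwa [eulerSomborWeight_sq])
  exact add_nonneg (mul_nonneg ha.le (Real.sqrt_nonneg _)) (mul_nonneg hb.le (Real.sqrt_nonneg _))

lemma StrictConvexOn.map_add_map_lt_of_add_eq {s : Set ℝ} {f : ℝ → ℝ} (hf : StrictConvexOn ℝ s f)
    {x y z w : ℝ} (hx : x ∈ s) (hw : w ∈ s) (hxy : x < y) (hxz : x < z) (h : x + w = y + z) :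
    f y + f z < f x + f w := by
  have hxw : x < w := by linarith
  have hd : 0 < w - x := sub_pos.2 hxw
  have ha : 0 < (w - y) / (w - x) := div_pos (by linarith) hd
  have hb : 0 < (y - x) / (w - x) := div_pos (by linarith) hd
  have hab : (w - y) / (w - x) + (y - x) / (w - x) = 1 := by field_simp; ring
  have hy := hf.2 hx hw hxw.ne ha hb hab
  have hz := hf.2 hx hw hxw.ne hb ha ((add_comm _ _).trans hab)
  have ey : (w - y) / (w - x) * x + (y - x) / (w - x) * w = y := by field_simp; ring
  have ez : (y - x) / (w - x) * x + (w - y) / (w - x) * w = z := by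
    field_simp
    linear_combination (w - x) * h
  simp only [smul_eq_mul, ey, ez] at hy hz
  linear_combination hy + hz + (f x + f w) * hab

theorem eus_clique_shift_gt_general (n p a₁ aᵢ aₖ : ℕ) (hnp : p + 2 ≤ n)
    (ha : aᵢ ≤ a₁) :
    0 < Real.sqrt (((n : ℝ) - p + a₁)^2 + ((n : ℝ) - p - 1 + aₖ)^2 +
          ((n : ℝ) - p + a₁) * ((n : ℝ) - p - 1 + aₖ)) +
        Real.sqrt (((n : ℝ) - p - 2 + aᵢ)^2 + ((n : ℝ) - p - 1 + aₖ)^2 +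
          ((n : ℝ) - p - 2 + aᵢ) * ((n : ℝ) - p - 1 + aₖ)) -
        Real.sqrt (((n : ℝ) - p - 1 + a₁)^2 + ((n : ℝ) - p - 1 + aₖ)^2 +
          ((n : ℝ) - p - 1 + a₁) * ((n : ℝ) - p - 1 + aₖ)) -
        Real.sqrt (((n : ℝ) - p - 1 + aᵢ)^2 + ((n : ℝ) - p - 1 + aₖ)^2 +
          ((n : ℝ) - p - 1 + aᵢ) * ((n : ℝ) - p - 1 + aₖ)) := by
  have hnp' : (p : ℝ) + 2 ≤ n := by exact_mod_cast hnp
  have ha' : (aᵢ : ℝ) ≤ a₁ := by exact_mod_cast ha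
  have hc : 0 < (n : ℝ) - p - 1 + aₖ := by have : (0 : ℝ) ≤ aₖ := aₖ.cast_nonneg; linarith
  have key := (strictConvexOn_eulerSomborWeight_left hc.ne').map_add_map_lt_of_add_eq
    (mem_univ ((n : ℝ) - p - 2 + aᵢ)) (mem_univ ((n : ℝ) - p + a₁))
    (y := (n : ℝ) - p - 1 + aᵢ) (z := (n : ℝ) - p - 1 + a₁) (by linarith) (by linarith) (by ring)
  unfold eulerSomborWeight at key
  linarith

/-- Claim 3: for positive integers `n, p` with `n - p ≥ 2`, positive integers `a₁ ≥ aᵢ ≥ 1` and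
an integer `a_k ≥ 0`,
`√((n-p+a₁)² + (n-p-1+a_k)² + (n-p+a₁)(n-p-1+a_k))
  + √((n-p-2+aᵢ)² + (n-p-1+a_k)² + (n-p-2+aᵢ)(n-p-1+a_k))
  − √((n-p-1+a₁)² + (n-p-1+a_k)² + (n-p-1+a₁)(n-p-1+a_k))
  − √((n-p-1+aᵢ)² + (n-p-1+a_k)² + (n-p-1+aᵢ)(n-p-1+a_k)) > 0`. -/
theorem eus_clique_shift_gt (n p a₁ aᵢ aₖ : ℕ) (hn : 0 < n) (hp : 0 < p) (hnp : p + 2 ≤ n)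
    (hai : 1 ≤ aᵢ) (ha : aᵢ ≤ a₁) :
    0 < Real.sqrt (((n : ℝ) - p + a₁)^2 + ((n : ℝ) - p - 1 + aₖ)^2 +
          ((n : ℝ) - p + a₁) * ((n : ℝ) - p - 1 + aₖ)) +
        Real.sqrt (((n : ℝ) - p - 2 + aᵢ)^2 + ((n : ℝ) - p - 1 + aₖ)^2 +
          ((n : ℝ) - p - 2 + aᵢ) * ((n : ℝ) - p - 1 + aₖ)) -
        Real.sqrt (((n : ℝ) - p - 1 + a₁)^2 + ((n : ℝ) - p - 1 + aₖ)^2 +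
          ((n : ℝ) - p - 1 + a₁) * ((n : ℝ) - p - 1 + aₖ)) -
        Real.sqrt (((n : ℝ) - p - 1 + aᵢ)^2 + ((n : ℝ) - p - 1 + aₖ)^2 +
          ((n : ℝ) - p - 1 + aᵢ) * ((n : ℝ) - p - 1 + aₖ)) :=
  eus_clique_shift_gt_general n p a₁ aᵢ aₖ hnp ha
end

section
/- Let G be a connected unicyclic graph of order n with girth g ≤ n−2 having at least two vertices of degree at least 3. Then EUS(G) > 3√19 + 2(n−3)√3, and in particular EUS(G) > 3√19 + 2(n−4)√3 + √7. -/
/-!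
Since `G` has as many edges as vertices, its degrees sum to `2n`. Each term of
`∑ (d - 1)(d - 2)` is nonnegative and each vertex of degree at least `3` contributes at
least `2`, so `∑ d² = ∑ (d - 1)(d - 2) + 3 ∑ d - 2n ≥ 4n + 4`. An edge of weight
`√(a² + b² + ab)` weighs at least `(√3 / 2)(a + b)`, and summing `a + b` over the edges gives
`∑ d²`; hence `EUS(G) ≥ 2√3 (n + 1)`. Both bounds follow from `3√19 < 8√3` and `√7 < 2√3`.
-/

open scoped Classical

open Finset

namespace SimpleGraph

variable {V : Type*} [Fintype V] (G : SimpleGraph V) [DecidableRel G.Adj]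
  {M : Type*} [AddCommMonoid M]

theorem sum_dart_fst [DecidableEq V] (f : V → M) :
    ∑ d : G.Dart, f d.fst = ∑ v, G.degree v • f v := by
  rw [← sum_fiberwise univ (fun d : G.Dart => d.fst)]
  refine sum_congr rfl fun v _ => ?_
  rw [sum_congr rfl fun d hd => congrArg f (mem_filter.1 hd).2, sum_const,
    dart_fst_fiber_card_eq_degree]

theorem sum_dart_snd [DecidableEq V] (f : V → M) :
    ∑ d : G.Dart, f d.snd = ∑ v, G.degree v • f v :=
  (Equiv.sum_comp Dart.symm_involutive.toPerm (fun d : G.Dart => f d.fst)).trans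
    (G.sum_dart_fst f)

theorem sum_dart_edge (F : Sym2 V → M) :
    ∑ d : G.Dart, F d.edge = 2 • ∑ e ∈ G.edgeFinset, F e := by
  classical
  rw [← sum_fiberwise_of_maps_to (t := G.edgeFinset) (g := Dart.edge)
    fun d _ => mem_edgeFinset.2 d.edge_mem, smul_sum]
  refine sum_congr rfl fun e he => ?_
  rw [sum_congr rfl fun d hd => congrArg F (mem_filter.1 hd).2, sum_const,
    dart_edge_fiber_card G e (mem_edgeFinset.1 he)]

end SimpleGraph

theorem Real.sqrt_three_div_two_mul_add_le (a b : ℝ) :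
    √3 / 2 * (a + b) ≤ √(a ^ 2 + b ^ 2 + a * b) := by
  refine Real.le_sqrt_of_sq_le ?_
  rw [mul_pow, div_pow, Real.sq_sqrt zero_le_three]
  nlinarith [sq_nonneg (a - b)]

theorem sqrt_three_div_two_mul_sum_degree_sq_le_EUS {V : Type*} [Fintype V] (G : SimpleGraph V) :
    √3 / 2 * ∑ v, (G.degree v : ℝ) ^ 2 ≤ EUS G := by
  have hweight (d : G.Dart) :
      √3 / 2 * ((G.degree d.fst : ℝ) + G.degree d.snd) ≤ eusWeight G d.edge :=
    Real.sqrt_three_div_two_mul_add_le _ _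
  have hsum : ∑ d : G.Dart, ((G.degree d.fst : ℝ) + G.degree d.snd)
      = 2 * ∑ v, (G.degree v : ℝ) ^ 2 := by
    rw [sum_add_distrib, G.sum_dart_fst (fun v => (G.degree v : ℝ)),
      G.sum_dart_snd (fun v => (G.degree v : ℝ))]
    simp only [nsmul_eq_mul, sq]
    ring
  have hdart : ∑ d : G.Dart, eusWeight G d.edge = 2 * EUS G := by
    rw [G.sum_dart_edge, nsmul_eq_mul, EUS, Nat.cast_two]
  suffices 2 * (√3 / 2 * ∑ v, (G.degree v : ℝ) ^ 2) ≤ 2 * EUS G by linarith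
  calc 2 * (√3 / 2 * ∑ v, (G.degree v : ℝ) ^ 2)
      = ∑ d : G.Dart, √3 / 2 * ((G.degree d.fst : ℝ) + G.degree d.snd) := by
        rw [← mul_sum, hsum]; ring
    _ ≤ ∑ d : G.Dart, eusWeight G d.edge := sum_le_sum fun d _ => hweight d
    _ = 2 * EUS G := hdart

theorem four_mul_card_add_four_le_sum_sq {V : Type*} [Fintype V] (d : V → ℕ)
    (hsum : ∑ v, d v = 2 * Fintype.card V) {u v : V} (huv : u ≠ v)
    (hu : 3 ≤ d u) (hv : 3 ≤ d v) :
    4 * Fintype.card V + 4 ≤ ∑ w, d w ^ 2 := by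
  set c : V → ℤ := fun w => ((d w : ℤ) - 1) * ((d w : ℤ) - 2)
  have hc (w : V) : 0 ≤ c w := by
    rcases le_or_gt (d w : ℤ) 1 with h | h
    · exact mul_nonneg_of_nonpos_of_nonpos (by omega) (by omega)
    · exact mul_nonneg (by omega) (by omega)
  have hpair : 4 ≤ ∑ w, c w := calc
    (4 : ℤ) ≤ c u + c v := by
      have hu' : (3 : ℤ) ≤ d u := by exact_mod_cast hu
      have hv' : (3 : ℤ) ≤ d v := by exact_mod_cast hv
      simp only [c]; nlinarith
    _ = ∑ w ∈ {u, v}, c w := (sum_pair huv).symm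
    _ ≤ ∑ w, c w := sum_le_sum_of_subset_of_nonneg (subset_univ _) fun w _ _ => hc w
  have hexpand :
      ∑ w, c w = ∑ w, (d w : ℤ) ^ 2 - 3 * ∑ w, (d w : ℤ) + 2 * Fintype.card V := by
    rw [mul_sum, ← sum_sub_distrib, Fintype.card_eq_sum_ones, Nat.cast_sum, mul_sum,
      ← sum_add_distrib]
    exact sum_congr rfl fun w _ => by simp only [c]; push_cast; ring
  have hsum' : ∑ w, (d w : ℤ) = 2 * Fintype.card V := by exact_mod_cast hsum
  zify
  linarith

theorem eus_unicyclic_two_branch_vertices_general {V : Type*} [Fintype V] (G : SimpleGraph V)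
    (n : ℕ) (hcard : Fintype.card V = n)
    (hunicyclic : G.edgeSet.ncard = Fintype.card V)
    (hbranch : ∃ u v : V, u ≠ v ∧ 3 ≤ G.degree u ∧ 3 ≤ G.degree v) :
    3 * Real.sqrt 19 + 2 * ((n : ℝ) - 3) * Real.sqrt 3 < EUS G ∧
      3 * Real.sqrt 19 + 2 * ((n : ℝ) - 4) * Real.sqrt 3 + Real.sqrt 7 < EUS G := by
  obtain ⟨u, v, huv, hu, hv⟩ := hbranch
  have hdegsum : ∑ w, G.degree w = 2 * Fintype.card V := by
    rw [G.sum_degrees_eq_twice_card_edges, ← hunicyclic, ← G.coe_edgeFinset,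
      Set.ncard_coe_finset]
  have hdeg : 4 * (n : ℝ) + 4 ≤ ∑ w, (G.degree w : ℝ) ^ 2 := by
    have := four_mul_card_add_four_le_sum_sq (fun w => G.degree w) hdegsum huv hu hv
    rw [hcard] at this
    exact_mod_cast this
  have hEUS : 2 * √3 * ((n : ℝ) + 1) ≤ EUS G := calc
    2 * √3 * ((n : ℝ) + 1) = √3 / 2 * (4 * n + 4) := by ring
    _ ≤ √3 / 2 * ∑ w, (G.degree w : ℝ) ^ 2 := by gcongr
    _ ≤ EUS G := sqrt_three_div_two_mul_sum_degree_sq_le_EUS G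
  have h19 : 3 * √19 < 8 * √3 := by
    refine lt_of_pow_lt_pow_left₀ 2 (by positivity) ?_
    rw [mul_pow, mul_pow, Real.sq_sqrt (by norm_num), Real.sq_sqrt (by norm_num)]
    norm_num
  have h7 : √7 < 2 * √3 := by
    refine lt_of_pow_lt_pow_left₀ 2 (by positivity) ?_
    rw [mul_pow, Real.sq_sqrt (by norm_num), Real.sq_sqrt (by norm_num)]
    norm_num
  constructor <;> linarith

/-- Let `G` be a connected unicyclic graph of order `n` with girth `g ≤ n - 2` having at least
two vertices of degree at least `3`. Then `EUS(G) > 3√19 + 2(n-3)√3`, and in particular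
`EUS(G) > 3√19 + 2(n-4)√3 + √7`. -/
theorem eus_unicyclic_two_branch_vertices {V : Type*} [Fintype V] (G : SimpleGraph V)
    (n g : ℕ) (hcard : Fintype.card V = n)
    (hconn : G.Connected) (hunicyclic : G.edgeSet.ncard = Fintype.card V)
    (hg : G.egirth = (g : ℕ∞)) (hgn : g + 2 ≤ n)
    (hbranch : ∃ u v : V, u ≠ v ∧ 3 ≤ G.degree u ∧ 3 ≤ G.degree v) :
    3 * Real.sqrt 19 + 2 * ((n : ℝ) - 3) * Real.sqrt 3 < EUS G ∧
      3 * Real.sqrt 19 + 2 * ((n : ℝ) - 4) * Real.sqrt 3 + Real.sqrt 7 < EUS G :=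
  eus_unicyclic_two_branch_vertices_general G n hcard hunicyclic hbranch
end
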